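/- Let m ∈ {1, 2, 3, 4}. With x_j = cos(jπ/n) the Chebyshev points, define E_m^0(n) = Σ_{1 ≤ i_1 < ⋯ < i_m ≤ n} ∏_{t=1}^{m} (1 − cos(i_t π/n))^{−1}, the elementary symmetric function of order m of the numbers 1/(1−x_1), …, 1/(1−x_n). Then lim_{n→∞} E_m^0(n)/n^{2m} = 2^m/(2m+1)!; that is, E_1^0 ~ n²/3, E_2^0 ~ n⁴/30, E_3^0 ~ n⁶/630 and E_4^0 ~ n⁸/22680. -/

import Mathlib

/-!
Scaled by `n²`, the reciprocal `1 / (1 - cos (jπ/n))` tends to `2 / (π² j²)` and is bounded by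
`1 / (2 j²)`, so by Tannery's theorem the scaled power sums `p_r / n^{2r}` tend to
`(2/π²)^r ζ(2r)`. Newton's identities express `E_m` through `p_1, …, p_m`, hence
`E_m / n^{2m}` tends to the `m`-th elementary symmetric function of the numbers `2 / (π² j²)`,
the coefficient of `z^m` in `∏ (1 + 2z / (π² j²)) = sinh √(2z) / √(2z)`, which is `2^m/(2m+1)!`.
For `m ≤ 4` this last identity is checked directly from `ζ(2), …, ζ(8)`.
-/

open Filter Finset Real Topology Nat

theorem Finset.mul_esymm_eq_sum {ι R : Type*} [CommRing R] (s : Finset ι) (f : ι → R) (k : ℕ) :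
    k * ∑ I ∈ s.powersetCard k, ∏ i ∈ I, f i = (-1) ^ (k + 1) *
      ∑ a ∈ antidiagonal k with a.1 < k,
        (-1) ^ a.1 * (∑ I ∈ s.powersetCard a.1, ∏ i ∈ I, f i) * ∑ i ∈ s, f i ^ a.2 := by
  let x : s → R := fun i => f i
  have hesymm (j : ℕ) :
      MvPolynomial.aeval x (MvPolynomial.esymm s R j) = ∑ I ∈ s.powersetCard j, ∏ i ∈ I, f i := by
    rw [MvPolynomial.aeval_esymm_eq_multiset_esymm, ← esymm_map_val]
    simp only [x, univ_eq_attach, attach_val]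
    exact congrArg (Multiset.esymm · j) (Multiset.attach_map_val' s.val f)
  have hpsum (j : ℕ) : MvPolynomial.aeval x (MvPolynomial.psum s R j) = ∑ i ∈ s, f i ^ j := by
    simp [x, MvPolynomial.psum, univ_eq_attach, sum_attach s (fun i => f i ^ j)]
  simpa only [map_mul, map_sum, map_pow, map_neg, map_one, map_natCast, hesymm, hpsum] using
    congrArg (MvPolynomial.aeval x) (MvPolynomial.mul_esymm_eq_sum s R k)

theorem tendsto_esymm_of_tendsto_powerSum {α ι 𝕜 : Type*} [Field 𝕜] [CharZero 𝕜]
    [TopologicalSpace 𝕜] [IsTopologicalRing 𝕜] {l : Filter α} {s : α → Finset ι}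
    {f : α → ι → 𝕜} {P e : ℕ → 𝕜} {K : ℕ}
    (hP : ∀ r, 1 ≤ r → r ≤ K → Tendsto (fun x => ∑ i ∈ s x, f x i ^ r) l (𝓝 (P r)))
    (he₀ : e 0 = 1)
    (he : ∀ k, 1 ≤ k → k ≤ K → k * e k =
      (-1) ^ (k + 1) * ∑ a ∈ antidiagonal k with a.1 < k, (-1) ^ a.1 * e a.1 * P a.2) :
    ∀ k ≤ K, Tendsto (fun x => ∑ I ∈ (s x).powersetCard k, ∏ i ∈ I, f x i) l (𝓝 (e k)) := by
  intro k
  induction k using Nat.strong_induction_on with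
  | _ k ih =>
  intro hkK
  rcases Nat.eq_zero_or_pos k with rfl | hk
  · simpa [he₀] using tendsto_const_nhds
  have hsum : Tendsto (fun x => (k : 𝕜) * ∑ I ∈ (s x).powersetCard k, ∏ i ∈ I, f x i) l
      (𝓝 (k * e k)) := by
    simp_rw [mul_esymm_eq_sum, he k hk hkK]
    refine (tendsto_finsetSum _ fun a ha => ?_).const_mul _
    obtain ⟨hak, ha1⟩ := mem_filter.mp ha
    have ha2 : a.1 + a.2 = k := mem_antidiagonal.mp hak
    exact ((ih a.1 ha1 (by omega)).const_mul _).mul (hP a.2 (by omega) (by omega))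
  have hk0 : (k : 𝕜) ≠ 0 := by exact_mod_cast hk.ne'
  simpa [hk0] using hsum.const_mul (k : 𝕜)⁻¹

theorem tendsto_sq_mul_one_sub_cos_div (c : ℝ) :
    Tendsto (fun n : ℕ => (n : ℝ) ^ 2 * (1 - cos (c / n))) atTop (𝓝 (c ^ 2 / 2)) := by
  rw [tendsto_iff_norm_sub_tendsto_zero]
  have hbound : Tendsto (fun n : ℕ => |c| ^ 4 * (5 / 96) / (n : ℝ) ^ 2) atTop (𝓝 0) :=
    tendsto_const_nhds.div_atTop <| (tendsto_pow_atTop two_ne_zero).comp tendsto_natCast_atTop_atTop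
  refine squeeze_zero' (Eventually.of_forall fun _ => norm_nonneg _) ?_ hbound
  obtain ⟨N, hN⟩ := exists_nat_ge |c|
  filter_upwards [eventually_ge_atTop (max N 1)] with n hn
  have hn0 : (0 : ℝ) < n := by exact_mod_cast (le_max_right N 1).trans hn
  have hcn : |c / n| ≤ 1 := by
    rw [abs_div, Nat.abs_cast, div_le_one hn0]
    exact hN.trans (by exact_mod_cast (le_max_left N 1).trans hn)
  have h := cos_bound hcn
  calc ‖(n : ℝ) ^ 2 * (1 - cos (c / n)) - c ^ 2 / 2‖
      = (n : ℝ) ^ 2 * |cos (c / n) - (1 - (c / n) ^ 2 / 2)| := by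
        have : (n : ℝ) ^ 2 * (1 - cos (c / n)) - c ^ 2 / 2
            = -((n : ℝ) ^ 2 * (cos (c / n) - (1 - (c / n) ^ 2 / 2))) := by
          field_simp
          ring
        rw [this, norm_neg, norm_mul, Real.norm_eq_abs, Real.norm_eq_abs, abs_of_pos (pow_pos hn0 2)]
    _ ≤ (n : ℝ) ^ 2 * (|c / n| ^ 4 * (5 / 96)) := by gcongr
    _ = |c| ^ 4 * (5 / 96) / (n : ℝ) ^ 2 := by
        rw [abs_div, Nat.abs_cast]
        field_simp

theorem two_mul_sq_le_sq_mul_one_sub_cos {j n : ℕ} (hjn : j ≤ n) :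
    2 * (j : ℝ) ^ 2 ≤ (n : ℝ) ^ 2 * (1 - cos (j * π / n)) := by
  rcases n.eq_zero_or_pos with rfl | hn
  · simp_all
  have hn' : (0 : ℝ) < n := by exact_mod_cast hn
  have hx : |j * π / n| ≤ π := by
    rw [abs_of_nonneg (by positivity), div_le_iff₀ hn']
    exact mul_comm π n ▸ mul_le_mul_of_nonneg_right (by exact_mod_cast hjn) pi_pos.le
  have := cos_le_one_sub_mul_cos_sq hx
  calc 2 * (j : ℝ) ^ 2 = (n : ℝ) ^ 2 * (2 / π ^ 2 * (j * π / n) ^ 2) := by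
        field_simp
    _ ≤ (n : ℝ) ^ 2 * (1 - cos (j * π / n)) := by gcongr; linarith

theorem tendsto_chebyshev_powerSum {r : ℕ} (hr : 1 ≤ r) :
    Tendsto (fun n : ℕ => ∑ j ∈ Icc 1 n, (1 / (1 - cos (j * π / n)) / n ^ 2) ^ r) atTop
      (𝓝 ((2 / π ^ 2) ^ r * ∑' j : ℕ, 1 / (j : ℝ) ^ (2 * r))) := by
  let F : ℕ → ℕ → ℝ := fun n =>
    (Icc 1 n : Set ℕ).indicator fun j => ((n : ℝ) ^ 2 * (1 - cos (j * π / n)))⁻¹ ^ r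
  have hlim (j : ℕ) :
      Tendsto (F · j) atTop (𝓝 ((2 / π ^ 2) ^ r * (1 / (j : ℝ) ^ (2 * r)))) := by
    rcases j.eq_zero_or_pos with rfl | hj
    · simp [F, zero_pow (show 2 * r ≠ 0 by omega)]
    have hne : (j * π : ℝ) ^ 2 / 2 ≠ 0 := by positivity
    have h := ((tendsto_sq_mul_one_sub_cos_div (j * π)).inv₀ hne).pow r
    convert h.congr' ?_ using 2
    · rw [pow_mul, ← one_div_pow, ← mul_pow]
      field_simp
    · filter_upwards [eventually_ge_atTop j] with n hn
      have hmem : j ∈ (Icc 1 n : Set ℕ) := by simp only [coe_Icc, Set.mem_Icc]; omega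
      exact (Set.indicator_of_mem hmem _ : F n j = _).symm
  have hbound (n j : ℕ) : ‖F n j‖ ≤ (1 / 2) ^ r * (1 / (j : ℝ) ^ (2 * r)) := by
    by_cases hmem : j ∈ (Icc 1 n : Set ℕ)
    · obtain ⟨hj1, hjn⟩ : 1 ≤ j ∧ j ≤ n := by simpa using hmem
      have hj : (0 : ℝ) < 2 * (j : ℝ) ^ 2 := by
        have : (0 : ℝ) < j := by exact_mod_cast hj1
        positivity
      have hq := two_mul_sq_le_sq_mul_one_sub_cos hjn
      rw [show F n j = _ from Set.indicator_of_mem hmem _, norm_pow, norm_inv,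
        Real.norm_of_nonneg (hj.trans_le hq).le, pow_mul, ← one_div_pow, ← mul_pow]
      refine pow_le_pow_left₀ (inv_nonneg.mpr (hj.trans_le hq).le) ?_ r
      rw [one_div_mul_one_div, one_div]
      exact inv_anti₀ hj hq
    · rw [show F n j = 0 from Set.indicator_of_notMem hmem _, norm_zero]
      positivity
  have hsum := tendsto_tsum_of_dominated_convergence
    ((Real.summable_one_div_nat_pow.mpr (by omega)).mul_left _) hlim (.of_forall hbound)
  rw [tsum_mul_left] at hsum
  refine hsum.congr fun n => ?_
  rw [← sum_eq_tsum_indicator]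
  refine sum_congr rfl fun j _ => ?_
  rw [one_div, div_eq_mul_inv (_⁻¹), ← mul_inv, mul_comm]

theorem bernoulli'_six : bernoulli' 6 = 1 / 42 := by
  rw [bernoulli'_def]
  norm_num [sum_range_succ, bernoulli'_eq_zero_of_odd (show Odd 5 by decide), Nat.choose]

theorem bernoulli'_eight : bernoulli' 8 = -1 / 30 := by
  rw [bernoulli'_def]
  norm_num [sum_range_succ, bernoulli'_six, bernoulli'_eq_zero_of_odd (show Odd 5 by decide),
    bernoulli'_eq_zero_of_odd (show Odd 7 by decide), Nat.choose]

theorem hasSum_zeta_six : HasSum (fun n : ℕ => (1 : ℝ) / (n : ℝ) ^ 6) (π ^ 6 / 945) := by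
  convert hasSum_zeta_nat (show 3 ≠ 0 by norm_num) using 1
  rw [bernoulli_eq_bernoulli'_of_ne_one (by norm_num), bernoulli'_six]
  norm_num [Nat.factorial]
  ring

theorem hasSum_zeta_eight : HasSum (fun n : ℕ => (1 : ℝ) / (n : ℝ) ^ 8) (π ^ 8 / 9450) := by
  convert hasSum_zeta_nat (show 4 ≠ 0 by norm_num) using 1
  rw [bernoulli_eq_bernoulli'_of_ne_one (by norm_num), bernoulli'_eight]
  norm_num [Nat.factorial]
  ring

theorem two_pow_div_factorial_newton {k : ℕ} (hk1 : 1 ≤ k) (hk4 : k ≤ 4) :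
    (k : ℝ) * (2 ^ k / (2 * k + 1)!) = (-1) ^ (k + 1) * ∑ a ∈ antidiagonal k with a.1 < k,
      (-1) ^ a.1 * (2 ^ a.1 / (2 * a.1 + 1)!) *
        ((2 / π ^ 2) ^ a.2 * ∑' j : ℕ, 1 / (j : ℝ) ^ (2 * a.2)) := by
  have ζ2 : ∑' j : ℕ, ((j : ℝ) ^ 2)⁻¹ = π ^ 2 / 6 := by simpa using hasSum_zeta_two.tsum_eq
  have ζ4 : ∑' j : ℕ, ((j : ℝ) ^ 4)⁻¹ = π ^ 4 / 90 := by simpa using hasSum_zeta_four.tsum_eq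
  have ζ6 : ∑' j : ℕ, ((j : ℝ) ^ 6)⁻¹ = π ^ 6 / 945 := by simpa using hasSum_zeta_six.tsum_eq
  have ζ8 : ∑' j : ℕ, ((j : ℝ) ^ 8)⁻¹ = π ^ 8 / 9450 := by simpa using hasSum_zeta_eight.tsum_eq
  have hπ := pi_ne_zero
  interval_cases k <;>
    simp [sum_filter, Nat.sum_antidiagonal_eq_sum_range_succ_mk, sum_range_succ, Nat.factorial,
      ζ2, ζ4, ζ6, ζ8] <;>
    field_simp <;> norm_num

/-- For `m ∈ {1,2,3,4}` and the Chebyshev points `x_j = cos(jπ/n)`,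
the elementary symmetric function `E_m^0(n)` of order `m` of `1/(1−x_1), …, 1/(1−x_n)`
satisfies `lim_{n→∞} E_m^0(n)/n^{2m} = 2^m/(2m+1)!`. -/
theorem stmt_10 (m : ℕ) (hm : m ∈ ({1, 2, 3, 4} : Finset ℕ)) :
    Filter.Tendsto
      (fun n : ℕ =>
        (∑ I ∈ (Finset.Icc 1 n).powersetCard m,
            ∏ i ∈ I, 1 / (1 - Real.cos (i * Real.pi / n))) /
          (n : ℝ) ^ (2 * m))
      Filter.atTop (nhds (2 ^ m / ((2 * m + 1).factorial : ℝ))) := by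
  have hm4 : m ≤ 4 := by simp only [mem_insert, mem_singleton] at hm; omega
  have hE := tendsto_esymm_of_tendsto_powerSum (l := atTop) (s := fun n : ℕ => Icc 1 n)
    (f := fun n j => 1 / (1 - cos (j * π / n)) / (n : ℝ) ^ 2)
    (e := fun k => (2 : ℝ) ^ k / (2 * k + 1)!) (fun r hr _ => tendsto_chebyshev_powerSum hr)
    (by simp) (fun k hk1 hk4 => two_pow_div_factorial_newton hk1 hk4) m hm4
  refine hE.congr fun n => ?_
  rw [sum_div]
  refine sum_congr rfl fun I hI => ?_
  rw [prod_div_distrib, prod_const, (mem_powersetCard.mp hI).2, ← pow_mul]
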